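/- arXiv:2301.13832 — 2 statements merged into one kernel-verified Lean document; each statement's English description precedes it below -/
import Mathlib

section
/- General bounds on the minimal family size (Corollary 3.5): every c-ideal family of hash functions has cardinality at least C(u,n)/M_c, and there exists a c-ideal family of cardinality at most (C(u,n)/M_c) · n · ln(u); equivalently, writing p := M_c/C(u,n) for the probability that a fixed load-maximizing hash function is c-ideal for a uniformly random S ∈ S_n, the minimal size H_c of a c-ideal family satisfies 1/p ≤ H_c ≤ (n·ln u)/p. -/
open Finset

/-- The maximum cell load of hash function `h` on key set `S`. -/
def cost {u m : ℕ} (h : Fin u → Fin m) (S : Finset (Fin u)) : ℕ :=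
  Finset.univ.sup fun k : Fin m => (S.filter fun x => h x = k).card

/-- The collection of all `n`-element subsets of the universe `Fin u`. -/
def Sn (u n : ℕ) : Finset (Finset (Fin u)) :=
  Finset.univ.powersetCard n

/-- The maximal number of `n`-element sets any single hash function maps `c`-ideally
(i.e., with maximum cell load at most `d`). -/
def Mc (u m n d : ℕ) : ℕ :=
  Finset.univ.sup fun h : Fin u → Fin m =>
    ((Sn u n).filter fun S => cost h S ≤ d).card

/-- A family `H` of hash functions is `c`-ideal if every `n`-element set of keys is
hashed with maximum cell load at most `d` by some member of `H`. -/
def IsIdealFamily (u m n d : ℕ) (H : Finset (Fin u → Fin m)) : Prop :=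
  ∀ S ∈ Sn u n, ∃ h ∈ H, cost h S ≤ d

/-!
A single hash function is `c`-ideal for at most `M_c` of the `C(u, n)` key sets, so covering
`S_n` needs at least `C(u, n) / M_c` of them. Conversely, the permutations of the universe act
transitively on `S_n` and carry the sets on which `h` is `c`-ideal to those of `h ∘ π`; averaging
a maximising `h` over all `π` shows that every `R ⊆ S_n` contains a fraction `p = M_c / C(u, n)`
of sets on which one hash function is `c`-ideal. Picking such functions greedily leaves at most
`(1 - p)^t C(u, n)` sets uncovered after `t` steps, and `1 - p ≤ exp (-(p + p² / 2))` together
with `2 C(u, n) ≤ u^n` makes this smaller than one for `t = ⌊n ln u / p⌋`. Finally `M_c > 0`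
because `m ∣ n`: reducing the keys `0, …, n - 1` modulo `m` loads every cell with `n / m` keys.
-/

open scoped Pointwise

section Averaging

variable {G β : Type*} [Group G] [Fintype G] [MulAction G β] [DecidableEq β] {X : Finset β}

lemma card_mul_card_filter_smul_eq (hXG : ∀ g : G, ∀ x ∈ X, g • x ∈ X)
    (hX : ∀ x ∈ X, ∀ y ∈ X, ∃ g : G, g • x = y) {x y : β} (hx : x ∈ X) (hy : y ∈ X) :
    #X * #{g : G | g • x = y} = Fintype.card G := by
  have hfibre : ∀ z ∈ X, #{g : G | g • x = z} = #{g : G | g • x = y} := by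
    intro z hz
    obtain ⟨σ, hσ⟩ := hX z hz y hy
    refine card_equiv (Equiv.mulLeft σ) fun g => ?_
    simp only [mem_filter, mem_univ, true_and, Equiv.coe_mulLeft, mul_smul]
    constructor
    · rintro rfl; exact hσ
    · intro h; simpa [← hσ] using h
  rw [← card_univ, card_eq_sum_card_fiberwise (s := univ) fun g _ => hXG g x hx,
    sum_const_nat hfibre]

lemma card_mul_card_filter_smul_mem (hXG : ∀ g : G, ∀ x ∈ X, g • x ∈ X)
    (hX : ∀ x ∈ X, ∀ y ∈ X, ∃ g : G, g • x = y) {A : Finset β} (hA : A ⊆ X) {x : β}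
    (hx : x ∈ X) : #X * #{g : G | g • x ∈ A} = Fintype.card G * #A := by
  rw [card_eq_sum_card_fiberwise (s := {g : G | g • x ∈ A}) (f := (· • x)) (t := A)
      fun g hg => (mem_filter.1 hg).2,
    mul_sum, sum_const_nat fun y hy => ?_, mul_comm]
  rw [filter_filter, ← card_mul_card_filter_smul_eq hXG hX hx (hA hy)]
  congr 2
  ext g
  simp only [mem_filter, mem_univ, true_and, and_iff_right_iff_imp]
  rintro rfl
  exact hy

lemma exists_card_mul_card_le_card_mul_card_filter_smul_mem
    (hXG : ∀ g : G, ∀ x ∈ X, g • x ∈ X) (hX : ∀ x ∈ X, ∀ y ∈ X, ∃ g : G, g • x = y)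
    {A R : Finset β} (hA : A ⊆ X) (hR : R ⊆ X) :
    ∃ g : G, #A * #R ≤ #X * #{x ∈ R | g • x ∈ A} := by
  have hsum : ∑ g : G, #X * #{x ∈ R | g • x ∈ A} = ∑ _g : G, #A * #R := by
    rw [← mul_sum]
    have := sum_card_bipartiteAbove_eq_sum_card_bipartiteBelow (s := univ) (t := R)
      (r := fun (g : G) x => g • x ∈ A)
    simp only [bipartiteAbove, bipartiteBelow] at this
    rw [this, mul_sum, sum_congr rfl fun x hx => card_mul_card_filter_smul_mem hXG hX hA (hR hx)]
    simp only [sum_const, card_univ, smul_eq_mul]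
    ring
  obtain ⟨g, -, hg⟩ := exists_le_of_sum_le univ_nonempty hsum.ge
  exact ⟨g, hg⟩

end Averaging

section GreedyCover

variable {ι β : Type*} [DecidableEq ι] {X : Finset β} {P : ι → β → Prop}
  [∀ i, DecidablePred (P i)] {p : ℝ}

lemma exists_card_le_card_uncovered_le (hp : p ≤ 1)
    (havg : ∀ R ⊆ X, ∃ i, p * #R ≤ #{x ∈ R | P i x}) (t : ℕ) :
    ∃ H : Finset ι, #H ≤ t ∧ (#{x ∈ X | ∀ i ∈ H, ¬ P i x} : ℝ) ≤ (1 - p) ^ t * #X := by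
  induction t with
  | zero => exact ⟨∅, by simp, by simp⟩
  | succ t ih =>
    obtain ⟨H, hHt, hH⟩ := ih
    set R := {x ∈ X | ∀ i ∈ H, ¬ P i x}
    obtain ⟨i, hi⟩ := havg R (filter_subset _ _)
    refine ⟨insert i H, (card_insert_le _ _).trans (by omega), ?_⟩
    have hR : {x ∈ X | ∀ j ∈ insert i H, ¬ P j x} = {x ∈ R | ¬ P i x} := by
      rw [filter_filter]
      exact filter_congr fun x _ => by rw [forall_mem_insert, and_comm]
    have hsplit : (#{x ∈ R | P i x} + #{x ∈ R | ¬ P i x} : ℝ) = #R := by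
      exact_mod_cast card_filter_add_card_filter_not _
    calc (#{x ∈ X | ∀ j ∈ insert i H, ¬ P j x} : ℝ) = #R - #{x ∈ R | P i x} := by
          rw [hR]; linarith
      _ ≤ (1 - p) * #R := by linarith
      _ ≤ (1 - p) * ((1 - p) ^ t * #X) := by gcongr
      _ = (1 - p) ^ (t + 1) * #X := by ring

lemma exists_cover_card_le (hp : p ≤ 1) (havg : ∀ R ⊆ X, ∃ i, p * #R ≤ #{x ∈ R | P i x})
    {t : ℕ} (ht : (1 - p) ^ t * #X < 1) :
    ∃ H : Finset ι, #H ≤ t ∧ ∀ x ∈ X, ∃ i ∈ H, P i x := by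
  obtain ⟨H, hHt, hH⟩ := exists_card_le_card_uncovered_le hp havg t
  have hempty : {x ∈ X | ∀ i ∈ H, ¬ P i x} = ∅ := by
    rw [← card_eq_zero, ← Nat.lt_one_iff]
    exact_mod_cast hH.trans_lt ht
  refine ⟨H, hHt, fun x hx => ?_⟩
  by_contra! hx'
  exact (filter_eq_empty_iff.1 hempty) hx hx'

end GreedyCover

lemma one_sub_le_exp_neg_add_sq_div_two {p : ℝ} (hp0 : 0 ≤ p) (hp1 : p ≤ 1) :
    1 - p ≤ Real.exp (-(p + p ^ 2 / 2)) := by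
  rcases hp1.lt_or_eq with hp1 | rfl
  · have hle : ∑ i ∈ range 2, p ^ (i + 1) / (i + 1) ≤ -Real.log (1 - p) :=
      sum_le_hasSum (range 2) (fun i _ => by positivity)
        (Real.hasSum_pow_div_log_of_abs_lt_one (by rw [abs_lt]; constructor <;> linarith))
    norm_num [sum_range_succ] at hle
    calc 1 - p = Real.exp (Real.log (1 - p)) := (Real.exp_log (by linarith)).symm
      _ ≤ Real.exp (-(p + p ^ 2 / 2)) := Real.exp_le_exp.2 (by linarith)
  · simp only [sub_self]
    positivity

lemma one_sub_pow_mul_lt_one {p A N : ℝ} {t : ℕ} (hp0 : 0 < p) (hp1 : p ≤ 1) (hA : 2 ≤ A)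
    (hN0 : 0 ≤ N) (hN : 2 * N ≤ Real.exp A) (ht : A / p - 1 ≤ t) : (1 - p) ^ t * N < 1 := by
  -- With `p` in place of `q`, rounding `t` down would cost a factor `exp p`, which exceeds `2`
  -- for `p` near `1`; the quadratic term absorbs it.
  set q := p + p ^ 2 / 2
  have htq : A - 1 / 2 ≤ t * q := by
    have hq : (A / p - 1) * q = A + (A / 2 - 1) * p - p ^ 2 / 2 := by
      simp only [q]; field_simp; ring
    have : (A / p - 1) * q ≤ t * q := by gcongr
    nlinarith
  have hexp_half : Real.exp (1 / 2) < 2 := by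
    calc Real.exp (1 / 2) < Real.exp (Real.log 2) :=
          Real.exp_lt_exp.2 (by linarith [Real.log_two_gt_d9])
      _ = 2 := Real.exp_log two_pos
  calc (1 - p) ^ t * N ≤ Real.exp (-q) ^ t * N := by
        gcongr
        exact one_sub_le_exp_neg_add_sq_div_two hp0.le hp1
    _ = Real.exp (-(t * q)) * N := by rw [← Real.exp_nat_mul]; ring_nf
    _ ≤ Real.exp (1 / 2 - A) * N := by gcongr; linarith
    _ ≤ Real.exp (1 / 2 - A) * (Real.exp A / 2) := by gcongr; linarith
    _ = Real.exp (1 / 2) / 2 := by rw [Real.exp_sub]; field_simp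
    _ < 1 := by linarith

lemma two_mul_choose_le_pow (u : ℕ) {n : ℕ} (hn : 2 ≤ n) :
    2 * (u.choose n : ℝ) ≤ (u : ℝ) ^ n := by
  have hchoose := Nat.choose_le_pow_div (α := ℝ) n u
  have hfac : (2 : ℝ) ≤ n.factorial := by exact_mod_cast Nat.factorial_le hn
  rw [le_div_iff₀ (by positivity)] at hchoose
  nlinarith [Nat.cast_nonneg (α := ℝ) (u.choose n)]

lemma two_le_natCast_mul_log {n u : ℕ} (hn : 2 ≤ n) (hu : 4 ≤ u) :
    2 ≤ (n : ℝ) * Real.log u := by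
  have hlog : 1 ≤ Real.log u := by
    rw [Real.le_log_iff_exp_le (by positivity)]
    have : (4 : ℝ) ≤ u := by exact_mod_cast hu
    linarith [Real.exp_one_lt_d9]
  have : (2 : ℝ) ≤ n := by exact_mod_cast hn
  nlinarith

lemma cost_comp_perm {u m : ℕ} (h : Fin u → Fin m) (π : Equiv.Perm (Fin u)) (S : Finset (Fin u)) :
    cost (h ∘ π) S = cost h (π • S) := by
  unfold cost
  congr 1
  funext k
  rw [smul_finset_def, filter_image, card_image_of_injective _ (MulAction.injective π)]
  rfl

lemma card_Sn (u n : ℕ) : #(Sn u n) = u.choose n := by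
  simp [Sn]

lemma Mc_le_card_Sn (u m n d : ℕ) : Mc u m n d ≤ #(Sn u n) :=
  Finset.sup_le fun _ _ => card_filter_le _ _

lemma smul_mem_Sn {u n : ℕ} (π : Equiv.Perm (Fin u)) {S : Finset (Fin u)} (hS : S ∈ Sn u n) :
    π • S ∈ Sn u n := by
  simpa [Sn, card_smul_finset] using hS

lemma exists_perm_smul_eq_of_mem_Sn {u n : ℕ} {S T : Finset (Fin u)} (hS : S ∈ Sn u n)
    (hT : T ∈ Sn u n) : ∃ π : Equiv.Perm (Fin u), π • S = T := by
  obtain ⟨π, hπ⟩ := (Set.powersetCard.isPretransitive (α := Fin u) (n := n)).exists_smul_eq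
    ⟨S, by simpa [Sn] using hS⟩ ⟨T, by simpa [Sn] using hT⟩
  exact ⟨π, congrArg Subtype.val hπ⟩

lemma exists_Mc_mul_card_le {u m n : ℕ} (d : ℕ) (hm : 0 < m) {R : Finset (Finset (Fin u))}
    (hR : R ⊆ Sn u n) :
    ∃ h : Fin u → Fin m, Mc u m n d * #R ≤ #(Sn u n) * #{S ∈ R | cost h S ≤ d} := by
  have : Nonempty (Fin m) := ⟨⟨0, hm⟩⟩
  obtain ⟨h₀, -, hh₀⟩ := exists_mem_eq_sup (univ : Finset (Fin u → Fin m)) univ_nonempty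
    fun h => #{S ∈ Sn u n | cost h S ≤ d}
  obtain ⟨π, hπ⟩ := exists_card_mul_card_le_card_mul_card_filter_smul_mem
    (fun π _ => smul_mem_Sn π) (fun _ hS _ hT => exists_perm_smul_eq_of_mem_Sn hS hT)
    (filter_subset (cost h₀ · ≤ d) (Sn u n)) hR
  refine ⟨h₀ ∘ π, ?_⟩
  rw [Mc, hh₀]
  convert hπ using 3
  refine filter_congr fun S hS => ?_
  rw [mem_filter, and_iff_right (smul_mem_Sn π (hR hS)), ← cost_comp_perm]

lemma exists_Mc_div_choose_mul_card_le {u m n : ℕ} (d : ℕ) (hm : 0 < m)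
    {R : Finset (Finset (Fin u))} (hR : R ⊆ Sn u n) :
    ∃ h : Fin u → Fin m, (Mc u m n d / u.choose n : ℝ) * #R ≤ #{S ∈ R | cost h S ≤ d} := by
  refine (exists_Mc_mul_card_le d hm hR).imp fun h hh => ?_
  rw [div_mul_eq_mul_div, ← card_Sn]
  refine div_le_of_le_mul₀ (by positivity) (by positivity) ?_
  exact_mod_cast hh.trans_eq (mul_comm _ _)

lemma choose_div_Mc_le_card {u m n d : ℕ} {H : Finset (Fin u → Fin m)}
    (hH : IsIdealFamily u m n d H) : (u.choose n / Mc u m n d : ℝ) ≤ #H := by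
  refine div_le_of_le_mul₀ (by positivity) (by positivity) ?_
  rw [← card_Sn]
  calc (#(Sn u n) : ℝ) ≤ #(H.biUnion fun h => {S ∈ Sn u n | cost h S ≤ d}) := by
        refine mod_cast card_le_card fun S hS => ?_
        obtain ⟨h, hhH, hh⟩ := hH S hS
        exact mem_biUnion.2 ⟨h, hhH, mem_filter.2 ⟨hS, hh⟩⟩
    _ ≤ #H * Mc u m n d := mod_cast card_biUnion_le_card_mul _ _ _ fun h _ =>
        le_sup (f := fun h : Fin u → Fin m => #{S ∈ Sn u n | cost h S ≤ d}) (mem_univ h)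

lemma exists_isIdealFamily_card_le {u m n d : ℕ} (hm : 0 < m) (hn : 2 ≤ n) (hu : 4 ≤ u)
    (hMc : 0 < Mc u m n d) :
    ∃ H : Finset (Fin u → Fin m), IsIdealFamily u m n d H ∧
      (#H : ℝ) ≤ u.choose n / Mc u m n d * n * Real.log u := by
  have hN : (#(Sn u n) : ℝ) = u.choose n := by rw [card_Sn]
  have hchoose : (0 : ℝ) < u.choose n := by
    rw [← hN]; exact_mod_cast hMc.trans_le (Mc_le_card_Sn u m n d)
  set p : ℝ := Mc u m n d / u.choose n
  set A : ℝ := n * Real.log u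
  have hp0 : 0 < p := by positivity
  have hp1 : p ≤ 1 := by
    rw [div_le_one hchoose, ← hN]
    exact_mod_cast Mc_le_card_Sn u m n d
  have hexpA : Real.exp A = (u : ℝ) ^ n := by
    rw [Real.exp_nat_mul, Real.exp_log (by positivity)]
  obtain ⟨H, hHt, hcover⟩ := exists_cover_card_le hp1
    (fun R hR => exists_Mc_div_choose_mul_card_le d hm hR) (t := ⌊A / p⌋₊) <| by
      rw [hN]
      exact one_sub_pow_mul_lt_one hp0 hp1 (two_le_natCast_mul_log hn hu) hchoose.le
        (hexpA ▸ two_mul_choose_le_pow u hn) (Nat.sub_one_lt_floor _).le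
  refine ⟨H, hcover, ?_⟩
  calc (#H : ℝ) ≤ ⌊A / p⌋₊ := by exact_mod_cast hHt
    _ ≤ A / p := Nat.floor_le (by positivity)
    _ = _ := by simp only [A, p]; field_simp

lemma cost_mod_le {u m : ℕ} (hm : 0 < m) (a : ℕ) :
    cost (fun x : Fin u => (⟨x % m, Nat.mod_lt _ hm⟩ : Fin m)) {x : Fin u | x < m * a} ≤ a := by
  refine Finset.sup_le fun k _ => ?_
  refine (card_le_card_of_injOn (t := range a) (fun x : Fin u => (x : ℕ) / m) ?_ ?_).trans
    (card_range a).le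
  · intro x hx
    simp only [coe_filter, mem_filter, mem_univ, true_and, Set.mem_ofPred_eq] at hx
    simpa using Nat.div_lt_of_lt_mul hx.1
  · intro x hx y hy hxy
    simp only [coe_filter, mem_filter, mem_univ, true_and, Set.mem_ofPred_eq, Fin.ext_iff] at hx hy
    rw [Fin.ext_iff, ← Nat.div_add_mod x m, ← Nat.div_add_mod y m, hx.2, hy.2,
      show (x : ℕ) / m = y / m from hxy]

lemma Mc_pos {u m n d : ℕ} (hm : 0 < m) (hnu : n ≤ u) (hdvd : m ∣ n) (hd : n / m ≤ d) :
    0 < Mc u m n d := by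
  obtain ⟨a, rfl⟩ := hdvd
  set S : Finset (Fin u) := {x | x < m * a}
  have hS : S ∈ Sn u (m * a) := by simp [Sn, S, Fin.card_filter_val_lt, hnu]
  set h : Fin u → Fin m := fun x => ⟨x % m, Nat.mod_lt _ hm⟩
  have hhS : cost h S ≤ d := (cost_mod_le hm a).trans (by rwa [Nat.mul_div_cancel_left _ hm] at hd)
  calc 0 < #{T ∈ Sn u (m * a) | cost h T ≤ d} := card_pos.2 ⟨S, mem_filter.2 ⟨hS, hhS⟩⟩
    _ ≤ Mc u m (m * a) d :=
        le_sup (f := fun h : Fin u → Fin m => #{T ∈ Sn u (m * a) | cost h T ≤ d}) (mem_univ h)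

theorem general_bounds_Hc_general (u m n d : ℕ) (hm : 2 ≤ m)
    (hmn : m ≤ n) (hnu : n ^ 2 ≤ u) (hdvd : m ∣ n) (hαd : n / m ≤ d) :
    (∀ H : Finset (Fin u → Fin m), IsIdealFamily u m n d H →
      (Nat.choose u n : ℝ) / (Mc u m n d : ℝ) ≤ H.card) ∧
    (∃ H : Finset (Fin u → Fin m), IsIdealFamily u m n d H ∧
      (H.card : ℝ) ≤ (Nat.choose u n : ℝ) / (Mc u m n d : ℝ) * n * Real.log u) := by
  have hn : 2 ≤ n := hm.trans hmn
  have hMc : 0 < Mc u m n d :=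
    Mc_pos (by omega) ((Nat.le_self_pow two_ne_zero n).trans hnu) hdvd hαd
  exact ⟨fun H hH => choose_div_Mc_le_card hH,
    exists_isIdealFamily_card_le (by omega) hn ((Nat.pow_le_pow_left hn 2).trans hnu) hMc⟩

/-- **General bounds on the minimal family size** (Corollary 3.5): every `c`-ideal family
has cardinality at least `C(u,n)/M_c = 1/p`, and some `c`-ideal family has cardinality at
most `(C(u,n)/M_c) · n · ln u = (n · ln u)/p`, where `p := M_c / C(u,n)`. -/
theorem general_bounds_Hc (u m n d : ℕ) (hu : 0 < u) (hm : 2 ≤ m) (hn : 0 < n)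
    (hmn : m ≤ n) (hnu : n ^ 2 ≤ u) (hdvd : m ∣ n) (hαd : n / m ≤ d) :
    (∀ H : Finset (Fin u → Fin m), IsIdealFamily u m n d H →
      (Nat.choose u n : ℝ) / (Mc u m n d : ℝ) ≤ H.card) ∧
    (∃ H : Finset (Fin u → Fin m), IsIdealFamily u m n d H ∧
      (H.card : ℝ) ≤ (Nat.choose u n : ℝ) / (Mc u m n d : ℝ) * n * Real.log u) :=
  general_bounds_Hc_general u m n d hm hmn hnu hdvd hαd
end

section
/- Upper bound on the minimal family size (Theorem 4.10): assume additionally that d divides n and 2 ≤ m. Then there exists a c-ideal family H of hash functions with |H| ≤ ⌈ ( (2πd)^{α/(2d)} · (d/α)^α · e^{α/(12d²)} · (α+1)^{α/d − 1} )^m · √(n/(2π)) · ln(u) ⌉; in the paper's notation with c = d/α this is H_c ≤ ⌈ ( √(2πcα)^{1/c} · c^α · e^{1/(12c²α)} / (α+1)^{1−1/c} )^m · √(n/(2π)) · ln u ⌉. -/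
open Finset

/-! For a fixed `n`-set `S`, a uniformly random hash function has maximal load at most `d` on `S`
with probability at least `p = (α + 1) ^ r * n! / (d! ^ k * m ^ n)`, where `k = n / d` and
`r = m - k`: choose the loads of `r` buckets freely in `[0, α]`, fill the other `k` buckets with at
most `d` keys each, and note that each such load vector is realised by at least
`n! / ∏ loadᵢ! ≥ n! / d! ^ k` maps `S → Fin m`. Greedily adding the hash function that handles the
most remaining sets leaves fewer than `binom(u, n) * exp (-p t) < u ^ n * exp (-p t)` sets
unhandled after `t` steps, so `t = ⌈n ln u / p⌉` steps suffice, and Stirling's bounds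
`√(2πn) (n/e)^n ≤ n! ≤ √(2πn) (n/e)^n e^(1/(12n))` turn `n / p` into the stated expression. -/

open Equiv Nat

section FiberCount

variable {α ι : Type*} [Fintype α] [DecidableEq ι]

theorem exists_card_fiber_eq [Fintype ι] (c : ι → ℕ) (hc : ∑ i, c i = Fintype.card α) :
    ∃ f : α → ι, ∀ i, Fintype.card {a // f a = i} = c i := by
  obtain ⟨e⟩ : Nonempty (α ≃ Σ i, Fin (c i)) := Fintype.card_eq.mp (by simp [hc])
  refine ⟨fun a => (e a).1, fun i => ?_⟩
  calc Fintype.card {a // (e a).1 = i} = Fintype.card {p : Σ i, Fin (c i) // p.1 = i} :=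
        Fintype.card_congr (e.subtypeEquiv fun _ => Iff.rfl)
    _ = c i := by rw [Fintype.card_congr (sigmaSubtype i), Fintype.card_fin]

theorem card_fiber_comp_perm (f : α → ι) (g : Perm α) (i : ι) :
    Fintype.card {a // (f ∘ g) a = i} = Fintype.card {a // f a = i} :=
  Fintype.card_congr (g.subtypeEquiv fun _ => Iff.rfl)

theorem card_image_comp_perm_mul_prod_factorial [DecidableEq α] [Fintype ι] (f : α → ι) :
    #(univ.image fun g : Perm α => f ∘ g) * ∏ i, (Fintype.card {a // f a = i})! =
      (Fintype.card α)! := by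
  calc _ = ∑ _h ∈ univ.image fun g : Perm α => f ∘ g, Fintype.card {g : Perm α // f ∘ g = f} := by
        rw [DomMulAct.stabilizer_card, sum_const, smul_eq_mul]
    _ = ∑ h ∈ univ.image fun g : Perm α => f ∘ g, #{g : Perm α | f ∘ g = h} := by
        refine sum_congr rfl fun _ hh => ?_
        obtain ⟨g₀, -, rfl⟩ := mem_image.mp hh
        rw [← Fintype.card_subtype]
        exact Fintype.card_congr <| (Equiv.mulRight g₀).subtypeEquiv fun s =>
          (g₀.surjective.injective_comp_right.eq_iff (a := f ∘ s) (b := f)).symm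
    _ = (Fintype.card α)! := by
        rw [← card_eq_sum_card_image, Finset.card_univ, Fintype.card_perm]

theorem factorial_le_card_fiber_eq_mul [DecidableEq α] [Fintype ι] (c : ι → ℕ)
    (hc : ∑ i, c i = Fintype.card α) :
    (Fintype.card α)! ≤ #{f : α → ι | ∀ i, Fintype.card {a // f a = i} = c i} * ∏ i, (c i)! := by
  obtain ⟨f, hf⟩ := exists_card_fiber_eq c hc
  rw [← card_image_comp_perm_mul_prod_factorial f]
  simp only [hf]
  gcongr
  intro _ h
  obtain ⟨g, -, rfl⟩ := mem_image.mp h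
  simpa [← hf] using card_fiber_comp_perm f g

theorem card_mul_factorial_le_card_fiber_le_mul [DecidableEq α] [Fintype ι] (V : Finset (ι → ℕ))
    (d P : ℕ)
    (hV : ∀ c ∈ V, ∑ i, c i = Fintype.card α ∧ (∀ i, c i ≤ d) ∧ ∏ i, (c i)! ≤ P) :
    #V * (Fintype.card α)! ≤ #{f : α → ι | ∀ i, Fintype.card {a // f a = i} ≤ d} * P := by
  set F : (ι → ℕ) → Finset (α → ι) := fun c => {f | ∀ i, Fintype.card {a // f a = i} = c i}
  have hdisj : (V : Set (ι → ℕ)).PairwiseDisjoint F := by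
    intro c _ c' _ hne
    refine disjoint_left.mpr fun f hf hf' => hne (funext fun i => ?_)
    simp only [F, mem_filter, mem_univ, true_and] at hf hf'
    rw [← hf, hf']
  calc #V * (Fintype.card α)! = ∑ c ∈ V, (Fintype.card α)! := by rw [sum_const, smul_eq_mul]
    _ ≤ ∑ c ∈ V, #(F c) * P := sum_le_sum fun c hc =>
        (factorial_le_card_fiber_eq_mul c (hV c hc).1).trans (Nat.mul_le_mul_left _ (hV c hc).2.2)
    _ = #(V.biUnion F) * P := by rw [card_biUnion hdisj, sum_mul]
    _ ≤ _ := by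
        gcongr
        intro f hf
        obtain ⟨c, hc, hf⟩ := mem_biUnion.mp hf
        simp only [F, mem_filter, mem_univ, true_and] at hf ⊢
        exact fun i => (hf i).trans_le ((hV c hc).2.1 i)

end FiberCount

theorem factorial_pow_le_factorial_pow {a b : ℕ} (h : a ≤ b) : a ! ^ b ≤ b ! ^ a := by
  induction b, h using Nat.le_induction with
  | base => rfl
  | succ b _ ih =>
    calc a ! ^ (b + 1) = a ! ^ b * a ! := pow_succ _ _
      _ ≤ b ! ^ a * (b + 1) ^ a :=
        Nat.mul_le_mul ih ((factorial_le_pow a).trans (Nat.pow_le_pow_left (by omega) a))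
      _ = (b + 1)! ^ a := by rw [← mul_pow, factorial_succ, mul_comm]

theorem prod_factorial_le_factorial_pow {ι : Type*} (s : Finset ι) {c : ι → ℕ} {d k : ℕ}
    (hc : ∀ i ∈ s, c i ≤ d) (hsum : ∑ i ∈ s, c i ≤ k * d) : ∏ i ∈ s, (c i)! ≤ d ! ^ k := by
  rcases Nat.eq_zero_or_pos d with rfl | hd
  · rw [prod_eq_one fun i hi => by rw [Nat.le_zero.mp (hc i hi), factorial_zero], factorial_zero,
      one_pow]
  refine (Nat.pow_le_pow_iff_left hd.ne').mp ?_
  calc (∏ i ∈ s, (c i)!) ^ d = ∏ i ∈ s, (c i)! ^ d := (prod_pow _ _ _).symm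
    _ ≤ ∏ i ∈ s, d ! ^ c i := prod_le_prod' fun i hi => factorial_pow_le_factorial_pow (hc i hi)
    _ = d ! ^ ∑ i ∈ s, c i := prod_pow_eq_pow_sum _ _ _
    _ ≤ d ! ^ (k * d) := Nat.pow_le_pow_right d.factorial_pos hsum
    _ = (d ! ^ k) ^ d := pow_mul _ _ _

theorem exists_fin_sum_eq_of_le_mul (d : ℕ) :
    ∀ {k R : ℕ}, R ≤ k * d → ∃ w : Fin k → ℕ, (∀ i, w i ≤ d) ∧ ∑ i, w i = R
  | 0, R, h => ⟨Fin.elim0, fun i => i.elim0, by simp_all⟩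
  | k + 1, R, h => by
    rw [succ_mul] at h
    obtain ⟨w, hw, hsum⟩ := exists_fin_sum_eq_of_le_mul d (k := k) (R := R - min d R) (by omega)
    exact ⟨Fin.cons (min d R) w, Fin.cases (min_le_left _ _) hw, by rw [Fin.sum_cons, hsum]; omega⟩

theorem exists_finset_card_eq_pow_bounded_sum_eq {ι : Type*} [Fintype ι] {r k a d n : ℕ}
    (hι : Fintype.card ι = r + k) (had : a ≤ d) (hra : r * a ≤ n) (hnk : n ≤ k * d) :
    ∃ V : Finset (ι → ℕ), #V = (a + 1) ^ r ∧ ∀ c ∈ V, ∑ i, c i = n ∧ ∀ i, c i ≤ d := by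
  have hfree (v : Fin r → Fin (a + 1)) : ∑ j, (v j : ℕ) ≤ r * a :=
    (sum_le_card_nsmul _ _ a fun j _ => Fin.is_le (v j)).trans_eq (by simp)
  choose w hw using fun v : Fin r → Fin (a + 1) =>
    exists_fin_sum_eq_of_le_mul d (k := k) (R := n - ∑ j, (v j : ℕ)) (by omega)
  obtain ⟨e⟩ : Nonempty (ι ≃ Fin r ⊕ Fin k) := Fintype.card_eq.mp (by simp [hι])
  let load (v : Fin r → Fin (a + 1)) : ι → ℕ := Sum.elim (fun j => (v j : ℕ)) (w v) ∘ e
  have hload : Function.Injective load := fun v v' h => funext fun j => Fin.ext <| by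
    simpa [load] using congrFun h (e.symm (.inl j))
  refine ⟨univ.map ⟨load, hload⟩, by simp, ?_⟩
  simp only [mem_map, mem_univ, true_and, Function.Embedding.coeFn_mk, forall_exists_index]
  rintro _ v rfl
  simp only [load, Function.comp_apply]
  refine ⟨?_, fun i => ?_⟩
  · rw [Equiv.sum_comp e (Sum.elim _ _), Fintype.sum_sum_type]
    simp only [Sum.elim_inl, Sum.elim_inr, (hw v).2]
    have := hfree v
    omega
  · rcases e i with j | j
    · exact (Fin.is_le (v j)).trans had
    · exact (hw v).1 j

theorem card_filter_comp_restrict {β ι : Type*} [Fintype β] [DecidableEq β] [Fintype ι]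
    (S : Finset β) (P : (S → ι) → Prop) [DecidablePred P] :
    #{h : β → ι | P fun x => h x} =
      #{f : S → ι | P f} * Fintype.card ι ^ (Fintype.card β - #S) := by
  rw [← Fintype.card_subtype, ← Fintype.card_subtype, ← Fintype.card_coe S,
    ← Fintype.card_subtype_compl, ← Fintype.card_fun, ← Fintype.card_prod]
  exact Fintype.card_congr <|
    ((Equiv.piEquivPiSubtypeProd (· ∈ S) fun _ => ι).subtypeEquiv fun _ => Iff.rfl).trans
      Equiv.prodSubtypeFstEquivSubtypeProd

theorem cost_le_iff {u m : ℕ} (h : Fin u → Fin m) (S : Finset (Fin u)) (d : ℕ) :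
    cost h S ≤ d ↔ ∀ k, Fintype.card {x : S // h x = k} ≤ d := by
  simp only [cost, Finset.sup_le_iff, mem_univ, true_implies]
  refine forall_congr' fun k => ?_
  rw [Fintype.card_congr (Equiv.subtypeSubtypeEquivSubtypeInter (· ∈ S) (h · = k)),
    Fintype.card_of_subtype _ fun _ => mem_filter]

theorem pow_mul_factorial_mul_pow_le_card_cost_le {u m n d a r k : ℕ} (had : a ≤ d)
    (hra : r * a ≤ n) (hnk : n ≤ k * d) (hrk : r + k = m) (hnu : n ≤ u) {S : Finset (Fin u)}
    (hS : #S = n) :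
    (a + 1) ^ r * n ! * m ^ u ≤ #{h : Fin u → Fin m | cost h S ≤ d} * (d ! ^ k * m ^ n) := by
  obtain ⟨V, hVcard, hV⟩ :=
    exists_finset_card_eq_pow_bounded_sum_eq (ι := Fin m) (by simp [hrk]) had hra hnk
  have hcount := card_mul_factorial_le_card_fiber_le_mul (α := S) V d (d ! ^ k) fun c hc =>
    ⟨by rw [(hV c hc).1, Fintype.card_coe, hS], (hV c hc).2,
      prod_factorial_le_factorial_pow _ (fun i _ => (hV c hc).2 i) ((hV c hc).1.trans_le hnk)⟩
  rw [hVcard, Fintype.card_coe, hS] at hcount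
  have hrestrict := card_filter_comp_restrict S fun f : S → Fin m =>
    ∀ k, Fintype.card {x // f x = k} ≤ d
  beta_reduce at hrestrict
  have hmu : m ^ u = m ^ n * m ^ (u - n) := by rw [← pow_add, Nat.add_sub_cancel' hnu]
  simp_rw [cost_le_iff]
  rw [hrestrict, Fintype.card_fin, Fintype.card_fin, hS, hmu]
  calc (a + 1) ^ r * n ! * (m ^ n * m ^ (u - n))
      ≤ #{f : S → Fin m | ∀ k, Fintype.card {x // f x = k} ≤ d} * d ! ^ k *
          (m ^ n * m ^ (u - n)) := Nat.mul_le_mul_right _ (by convert hcount)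
    _ = _ := by ring

section GreedyCover

open Real

variable {α β : Type*} [Fintype α] [Nonempty α] (P : α → β → Prop) [∀ h S, Decidable (P h S)]
  {p : ℝ}

theorem exists_mul_card_le_card_filter (R : Finset β)
    (hp : ∀ S ∈ R, p * Fintype.card α ≤ #{h | P h S}) : ∃ h, p * #R ≤ #{S ∈ R | P h S} := by
  obtain ⟨h, -, hh⟩ := exists_le_of_sum_le (s := univ) univ_nonempty
    (f := fun _ => p * #R) (g := fun h => (#{S ∈ R | P h S} : ℝ)) <| by
    calc ∑ _h : α, p * #R = ∑ _S ∈ R, p * Fintype.card α := by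
          simp only [sum_const, Finset.card_univ, nsmul_eq_mul]; ring
      _ ≤ ∑ S ∈ R, (#{h | P h S} : ℝ) := sum_le_sum hp
      _ = ∑ h, (#{S ∈ R | P h S} : ℝ) := by
          simp only [← Nat.cast_sum]
          exact_mod_cast (sum_card_bipartiteAbove_eq_sum_card_bipartiteBelow (r := P)).symm
  exact ⟨h, hh⟩

theorem exists_card_le_card_uncovered_le_mul_exp [DecidableEq α] (𝒮 : Finset β)
    (hp : ∀ S ∈ 𝒮, p * Fintype.card α ≤ #{h | P h S}) (t : ℕ) :
    ∃ H : Finset α, #H ≤ t ∧ (#{S ∈ 𝒮 | ∀ h ∈ H, ¬P h S} : ℝ) ≤ #𝒮 * exp (-(p * t)) := by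
  induction t with
  | zero => exact ⟨∅, by simp, by simp⟩
  | succ t ih =>
    obtain ⟨H, hHt, hH⟩ := ih
    set R := {S ∈ 𝒮 | ∀ h ∈ H, ¬P h S}
    obtain ⟨h₀, hh₀⟩ := exists_mul_card_le_card_filter P R fun S hS => hp S (mem_filter.mp hS).1
    refine ⟨insert h₀ H, (card_insert_le _ _).trans (by omega), ?_⟩
    have hsplit : {S ∈ 𝒮 | ∀ h ∈ insert h₀ H, ¬P h S} = {S ∈ R | ¬P h₀ S} := by
      ext S
      simp only [R, mem_filter, forall_mem_insert]
      tauto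
    have hcard : (#{S ∈ R | ¬P h₀ S} : ℝ) = #R - #{S ∈ R | P h₀ S} := by
      rw [eq_sub_iff_add_eq, add_comm]
      exact_mod_cast card_filter_add_card_filter_not (P h₀)
    rw [hsplit, hcard]
    calc (#R : ℝ) - #{S ∈ R | P h₀ S} ≤ #R * (1 - p) := by linarith
      _ ≤ #R * exp (-p) := by
          gcongr
          linarith [add_one_le_exp (-p)]
      _ ≤ #𝒮 * exp (-(p * t)) * exp (-p) := by gcongr
      _ = #𝒮 * exp (-(p * ↑(t + 1))) := by
          rw [mul_assoc, ← exp_add]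
          congr 2
          push_cast
          ring

theorem exists_cover_of_card_lt_exp [DecidableEq α] (𝒮 : Finset β)
    (hp : ∀ S ∈ 𝒮, p * Fintype.card α ≤ #{h | P h S}) {t : ℕ} (ht : (#𝒮 : ℝ) < exp (p * t)) :
    ∃ H : Finset α, #H ≤ t ∧ ∀ S ∈ 𝒮, ∃ h ∈ H, P h S := by
  obtain ⟨H, hHt, hH⟩ := exists_card_le_card_uncovered_le_mul_exp P 𝒮 hp t
  refine ⟨H, hHt, fun S hS => ?_⟩
  have hempty : {S ∈ 𝒮 | ∀ h ∈ H, ¬P h S} = ∅ := by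
    rw [← Finset.card_eq_zero, ← Nat.lt_one_iff, ← Nat.cast_lt (α := ℝ), Nat.cast_one]
    calc _ ≤ (#𝒮 : ℝ) * exp (-(p * t)) := hH
      _ < exp (p * t) * exp (-(p * t)) := by gcongr
      _ = 1 := by rw [← exp_add, add_neg_cancel, exp_zero]
  by_contra! hS'
  exact (eq_empty_iff_forall_notMem.mp hempty S) (mem_filter.mpr ⟨hS, hS'⟩)

end GreedyCover

namespace Stirling

open Real Filter Topology

theorem log_stirlingSeq_sub_le_log_sqrt_pi {n : ℕ} (hn : n ≠ 0) :
    log (stirlingSeq n) - 1 / (12 * n) ≤ log √π := by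
  obtain ⟨n, rfl⟩ := Nat.exists_eq_add_one_of_ne_zero hn
  let g (k : ℕ) : ℝ := log (stirlingSeq (k + 1)) - 12⁻¹ * (1 / ((k : ℝ) + 1))
  -- Robbins' bound `1 / (12 k (k + 1))` telescopes: `g` is monotone.
  have hmono : Monotone g := monotone_nat_of_le_succ fun k => by
    have hstep := log_stirlingSeq_sdiff_le (k + 1)
    have htel : (1 : ℝ) / (12 * ↑(k + 1) * (↑(k + 1) + 1)) =
        12⁻¹ * (1 / ((k : ℝ) + 1)) - 12⁻¹ * (1 / ((↑(k + 1) : ℝ) + 1)) := by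
      push_cast; field_simp; ring
    simp only [g]
    linarith
  have hlim : Tendsto g atTop (𝓝 (log √π - 12⁻¹ * 0)) :=
    ((tendsto_stirlingSeq_sqrt_pi.comp (tendsto_add_atTop_nat 1)).log (by positivity)).sub
      (tendsto_one_div_add_atTop_nhds_zero_nat.const_mul _)
  have hg := hmono.ge_of_tendsto hlim n
  simp only [g, mul_zero, sub_zero] at hg
  rwa [show (1 : ℝ) / (12 * ↑(n + 1)) = 12⁻¹ * (1 / (n + 1)) by push_cast; field_simp]

theorem factorial_le_stirling_mul_exp {n : ℕ} (hn : n ≠ 0) :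
    (n ! : ℝ) ≤ √(2 * π * n) * (n / exp 1) ^ n * exp (1 / (12 * n)) := by
  have hpos : 0 < √(2 * n) * (n / exp 1) ^ n := by
    have : (0 : ℝ) < n := by exact_mod_cast Nat.pos_of_ne_zero hn
    positivity
  have hseq : stirlingSeq n ≤ √π * exp (1 / (12 * n)) := by
    rw [← exp_log (sqrt_pos.mpr pi_pos), ← exp_add,
      ← log_le_iff_le_exp ((sqrt_pos.mpr pi_pos).trans_le (sqrt_pi_le_stirlingSeq hn))]
    linarith [log_stirlingSeq_sub_le_log_sqrt_pi hn]
  rw [stirlingSeq, div_le_iff₀ hpos] at hseq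
  calc (n ! : ℝ) ≤ √π * exp (1 / (12 * n)) * (√(2 * n) * (n / exp 1) ^ n) := hseq
    _ = _ := by
      rw [show (2 : ℝ) * π * n = π * (2 * n) by ring, sqrt_mul pi_pos.le]
      ring

end Stirling

section Bound

open Real

/-- With `c = d / a`, this is the paper's `√(2πca)^(1/c) c^a e^(1/(12c²a)) / (a+1)^(1-1/c)`. -/
noncomputable def cellBound (a d : ℕ) : ℝ :=
  (2 * π * d) ^ ((a : ℝ) / (2 * d)) * ((d : ℝ) / a) ^ a * exp (a / (12 * (d : ℝ) ^ 2)) *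
    ((a : ℝ) + 1) ^ ((a : ℝ) / d - 1)

variable {a d m n k r : ℕ}

theorem cellBound_pow_mul (hd : 0 < d) (hn : a * m = n) (hk : k * d = n) (hrk : r + k = m) :
    cellBound a d ^ m * ((a : ℝ) + 1) ^ r =
      √(2 * π * d) ^ k * ((d : ℝ) / a) ^ n * exp (1 / (12 * d)) ^ k := by
  have hamk : (a : ℝ) * m = k * d := by exact_mod_cast hn.trans hk.symm
  have hr : (r : ℝ) = m - k := by rw [← hrk]; push_cast; ring
  have h2π : (0 : ℝ) ≤ 2 * π * d := by positivity
  have hsqrt : ((2 * π * d) ^ ((a : ℝ) / (2 * d))) ^ m = √(2 * π * d) ^ k := by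
    rw [sqrt_eq_rpow, ← rpow_natCast, ← rpow_natCast _ k, ← rpow_mul h2π, ← rpow_mul h2π]
    congr 1
    field_simp
    linear_combination hamk
  have hexp : exp (a / (12 * (d : ℝ) ^ 2)) ^ m = exp (1 / (12 * d)) ^ k := by
    rw [← exp_nat_mul, ← exp_nat_mul]
    congr 1
    field_simp
    linear_combination hamk
  have hcorr : (((a : ℝ) + 1) ^ ((a : ℝ) / d - 1)) ^ m * ((a : ℝ) + 1) ^ r = 1 := by
    rw [← rpow_natCast, ← rpow_natCast _ r, ← rpow_mul (by positivity),
      ← rpow_add (by positivity)]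
    convert rpow_zero ((a : ℝ) + 1) using 2
    rw [hr]
    field_simp
    linear_combination hamk
  calc cellBound a d ^ m * ((a : ℝ) + 1) ^ r
      = ((2 * π * d) ^ ((a : ℝ) / (2 * d))) ^ m * (((d : ℝ) / a) ^ a) ^ m *
          exp (a / (12 * (d : ℝ) ^ 2)) ^ m *
          ((((a : ℝ) + 1) ^ ((a : ℝ) / d - 1)) ^ m * ((a : ℝ) + 1) ^ r) := by
        rw [cellBound]; ring
    _ = _ := by rw [hsqrt, hexp, hcorr, ← pow_mul, hn, mul_one]

theorem mul_factorial_pow_mul_pow_le (ha : 0 < a) (hd : 0 < d) (hn : a * m = n) (hk : k * d = n)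
    (hrk : r + k = m) :
    (n : ℝ) * ((d ! : ℝ) ^ k * (m : ℝ) ^ n) ≤
      ((a : ℝ) + 1) ^ r * n ! * (cellBound a d ^ m * √(n / (2 * π))) := by
  have hsqrt : √(2 * π * n) * √(n / (2 * π)) = n := by
    rw [← sqrt_mul (by positivity), show 2 * π * n * (n / (2 * π)) = (n : ℝ) ^ 2 by field_simp,
      sqrt_sq n.cast_nonneg]
  have hpow : ((n : ℝ) / exp 1) ^ n * ((d : ℝ) / a) ^ n = ((d : ℝ) / exp 1) ^ n * (m : ℝ) ^ n := by
    rw [← mul_pow, ← mul_pow, ← hn]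
    congr 1
    push_cast
    field_simp
  calc (n : ℝ) * ((d ! : ℝ) ^ k * (m : ℝ) ^ n)
      ≤ n * ((√(2 * π * d) * (d / exp 1) ^ d * exp (1 / (12 * d))) ^ k * (m : ℝ) ^ n) := by
        gcongr
        exact Stirling.factorial_le_stirling_mul_exp hd.ne'
    _ = √(2 * π * n) * (n / exp 1) ^ n * (cellBound a d ^ m * ((a : ℝ) + 1) ^ r) *
          √(n / (2 * π)) := by
        rw [cellBound_pow_mul hd hn hk hrk, mul_pow, mul_pow, ← pow_mul, mul_comm d k, hk]
        linear_combination (√(2 * π * d) ^ k * exp (1 / (12 * d)) ^ k) *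
          (-(((n : ℝ) / exp 1) ^ n * ((d : ℝ) / a) ^ n) * hsqrt - (n : ℝ) * hpow)
    _ ≤ n ! * (cellBound a d ^ m * ((a : ℝ) + 1) ^ r) * √(n / (2 * π)) := by
        gcongr
        · exact mul_nonneg (pow_nonneg (by unfold cellBound; positivity) _) (by positivity)
        · exact Stirling.le_factorial_stirling n
    _ = _ := by ring

end Bound

open Real in
theorem upper_bound_minimal_family_size_general (u m n d : ℕ) (hm : 2 ≤ m)
    (hmn : m ≤ n) (hnu : n ^ 2 ≤ u) (hdvdm : m ∣ n) (hαd : n / m ≤ d)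
    (hdvdd : d ∣ n) :
    ∃ H : Finset (Fin u → Fin m), IsIdealFamily u m n d H ∧
      H.card ≤ ⌈((2 * π * (d : ℝ)) ^ (((n / m : ℕ) : ℝ) / (2 * (d : ℝ))) *
          ((d : ℝ) / ((n / m : ℕ) : ℝ)) ^ (n / m) *
          Real.exp (((n / m : ℕ) : ℝ) / (12 * (d : ℝ) ^ 2)) *
          (((n / m : ℕ) : ℝ) + 1) ^ ((((n / m : ℕ) : ℝ)) / (d : ℝ) - 1)) ^ m *
        Real.sqrt ((n : ℝ) / (2 * π)) * Real.log u⌉₊ := by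
  set a := n / m
  set k := n / d
  have hn : a * m = n := Nat.div_mul_cancel hdvdm
  have hk : k * d = n := Nat.div_mul_cancel hdvdd
  have ha : 0 < a := Nat.div_pos hmn (by omega)
  have hd : 0 < d := ha.trans_le hαd
  obtain ⟨r, hrk⟩ : ∃ r, r + k = m :=
    ⟨m - k, Nat.sub_add_cancel <| Nat.le_of_mul_le_mul_right (by nlinarith) hd⟩
  have hnu' : n ≤ u := by nlinarith
  set p : ℝ := ((a : ℝ) + 1) ^ r * n ! / ((d ! : ℝ) ^ k * (m : ℝ) ^ n)
  set X := cellBound a d ^ m * √(n / (2 * π)) * Real.log u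
  have hgood (S) (hS : S ∈ Sn u n) :
      p * Fintype.card (Fin u → Fin m) ≤ #{h : Fin u → Fin m | cost h S ≤ d} := by
    rw [Fintype.card_fun, Fintype.card_fin, Fintype.card_fin, div_mul_eq_mul_div,
      div_le_iff₀ (by positivity)]
    exact_mod_cast pow_mul_factorial_mul_pow_le_card_cost_le hαd (by nlinarith) hk.ge hrk hnu'
      (mem_powersetCard.mp hS).2
  have hX : n * Real.log u ≤ p * X := by
    calc (n : ℝ) * Real.log u ≤ p * (cellBound a d ^ m * √(n / (2 * π))) * Real.log u := by
          gcongr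
          rw [div_mul_eq_mul_div, le_div_iff₀ (by positivity)]
          exact mul_factorial_pow_mul_pow_le ha hd hn hk hrk
      _ = p * X := by ring
  have hcard : (#(Sn u n) : ℝ) < exp (p * ⌈X⌉₊) := by
    calc (#(Sn u n) : ℝ) = u.choose n := by simp [Sn]
      _ < (u : ℝ) ^ n := by exact_mod_cast Nat.choose_lt_pow (by nlinarith) (by omega)
      _ = exp (n * Real.log u) := by
        rw [exp_nat_mul, exp_log (by exact_mod_cast (by nlinarith : 0 < u))]
      _ ≤ exp (p * ⌈X⌉₊) := exp_le_exp.mpr (hX.trans (by gcongr; exact Nat.le_ceil X))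
  have : NeZero m := ⟨by omega⟩
  obtain ⟨H, hH, hcover⟩ :=
    exists_cover_of_card_lt_exp (fun h S => cost h S ≤ d) (Sn u n) hgood hcard
  exact ⟨H, hcover, hH⟩

open Real in
/-- **Upper bound on the minimal family size** (Theorem 4.10): with `α := n/m`, `α ≤ d`,
`d ∣ n` and `2 ≤ m`, there is a `c`-ideal family `H` with
`|H| ≤ ⌈((2πd)^(α/(2d)) · (d/α)^α · e^(α/(12d²)) · (α+1)^(α/d − 1))^m · √(n/(2π)) · ln u⌉`. -/
theorem upper_bound_minimal_family_size (u m n d : ℕ) (hu : 0 < u) (hm : 2 ≤ m)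
    (hn : 0 < n) (hmn : m ≤ n) (hnu : n ^ 2 ≤ u) (hdvdm : m ∣ n) (hαd : n / m ≤ d)
    (hdvdd : d ∣ n) :
    ∃ H : Finset (Fin u → Fin m), IsIdealFamily u m n d H ∧
      H.card ≤ ⌈((2 * π * (d : ℝ)) ^ (((n / m : ℕ) : ℝ) / (2 * (d : ℝ))) *
          ((d : ℝ) / ((n / m : ℕ) : ℝ)) ^ (n / m) *
          Real.exp (((n / m : ℕ) : ℝ) / (12 * (d : ℝ) ^ 2)) *
          (((n / m : ℕ) : ℝ) + 1) ^ ((((n / m : ℕ) : ℝ)) / (d : ℝ) - 1)) ^ m *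
        Real.sqrt ((n : ℝ) / (2 * π)) * Real.log u⌉₊ :=
  upper_bound_minimal_family_size_general u m n d hm hmn hnu hdvdm hαd hdvdd
end
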